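/- arXiv:2412.19095 — 6 statements merged into one kernel-verified Lean document; each statement's English description precedes it below -/
import Mathlib

section
/- For graphs G_1 and G_2 on n_1 and n_2 vertices respectively, the Laplacian characteristic polynomial of the join G_1 + G_2 satisfies μ(G_1+G_2; x) = [x(x - n_1 - n_2)/((x - n_1)(x - n_2))] · μ(G_1; x - n_2) · μ(G_2; x - n_1). -/
open scoped Classical
open Polynomial

/-- The join `G + H` of two simple graphs: all edges of `G` and `H`, plus all
edges between the two vertex sets. -/
def joinGraph {V W : Type*} (G : SimpleGraph V) (H : SimpleGraph W) : SimpleGraph (V ⊕ W) where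
  Adj x y :=
    match x, y with
    | Sum.inl a, Sum.inl b => G.Adj a b
    | Sum.inr a, Sum.inr b => H.Adj a b
    | _, _ => True
  symm := ⟨by
    rintro (a | a) (b | b) h
    · exact G.adj_symm h
    · trivial
    · trivial
    · exact H.adj_symm h⟩
  loopless := ⟨by
    rintro (a | a) h
    · exact G.ne_of_adj h rfl
    · exact H.ne_of_adj h rfl⟩

section Aux
open Matrix

lemma eval_charpoly' {n : Type*} [Fintype n] [DecidableEq n] (M : Matrix n n ℝ) (x : ℝ) :
    M.charpoly.eval x = (x • (1 : Matrix n n ℝ) - M).det := by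
  rw [Matrix.charpoly, ← coe_evalRingHom, RingHom.map_det]
  congr 1
  ext i j
  by_cases h : i = j
  · subst h
    simp [Matrix.charmatrix_apply_eq, Matrix.one_apply]
  · simp [Matrix.charmatrix_apply_ne _ _ _ h, Matrix.one_apply, h]

lemma inv_mulVec_one {V : Type*} [Fintype V] [DecidableEq V] (A : Matrix V V ℝ) (a : ℝ)
    (hA : A *ᵥ (fun _ => 1) = a • (fun _ => (1 : ℝ))) (hAd : IsUnit A.det) (ha : a ≠ 0) :
    A⁻¹ *ᵥ (fun _ => 1) = a⁻¹ • (fun _ => (1 : ℝ)) := by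
  have h1 : a • (A⁻¹ *ᵥ (fun _ => 1)) = (fun _ => (1 : ℝ)) := by
    rw [← Matrix.mulVec_smul, ← hA, Matrix.mulVec_mulVec, Matrix.nonsing_inv_mul _ hAd,
      Matrix.one_mulVec]
  calc A⁻¹ *ᵥ (fun _ => 1) = a⁻¹ • (a • (A⁻¹ *ᵥ fun _ => 1)) := by
        rw [smul_smul, inv_mul_cancel₀ ha, one_smul]
    _ = a⁻¹ • (fun _ => (1 : ℝ)) := by rw [h1]

lemma block_det {V W : Type*} [Fintype V] [Fintype W] [DecidableEq V] [DecidableEq W]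
    (A : Matrix V V ℝ) (B : Matrix W W ℝ) (a b : ℝ)
    (hA : A *ᵥ (fun _ => 1) = a • (fun _ => (1 : ℝ)))
    (hB : B *ᵥ (fun _ => 1) = b • (fun _ => (1 : ℝ)))
    (hAd : IsUnit A.det) (hBd : IsUnit B.det) (ha : a ≠ 0) (hb : b ≠ 0) :
    a * b * (Matrix.fromBlocks A (Matrix.of fun _ _ => (1:ℝ)) (Matrix.of fun _ _ => (1:ℝ)) B).det
      = (a * b - (Fintype.card V : ℝ) * (Fintype.card W : ℝ)) * A.det * B.det := by
  haveI : Invertible A := A.invertibleOfIsUnitDet hAd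
  have hAinv := inv_mulVec_one A a hA hAd ha
  have hBinv := inv_mulVec_one B b hB hBd hb
  have hArow : ∀ k : V, ∑ l : V, A⁻¹ k l = a⁻¹ := by
    intro k
    have := congrFun hAinv k
    simpa [Matrix.mulVec, dotProduct] using this
  have hBrow : ∀ k : W, ∑ l : W, B⁻¹ k l = b⁻¹ := by
    intro k
    have := congrFun hBinv k
    simpa [Matrix.mulVec, dotProduct] using this
  rw [Matrix.det_fromBlocks₁₁, Matrix.invOf_eq_nonsing_inv]
  have hschur : (B - ((Matrix.of fun _ _ => (1:ℝ)) : Matrix W V ℝ) * A⁻¹ *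
        ((Matrix.of fun _ _ => (1:ℝ)) : Matrix V W ℝ))
      = B + Matrix.replicateCol Unit (fun _ => -((Fintype.card V : ℝ) * a⁻¹)) *
          Matrix.replicateRow Unit (fun _ => (1:ℝ)) := by
    ext i j
    have h1 : (((Matrix.of fun _ _ => (1:ℝ)) : Matrix W V ℝ) * A⁻¹ *
        ((Matrix.of fun _ _ => (1:ℝ)) : Matrix V W ℝ)) i j = (Fintype.card V : ℝ) * a⁻¹ := by
      simp only [Matrix.mul_apply, Matrix.of_apply, one_mul, mul_one]
      rw [Finset.sum_comm]
      simp [hArow, Finset.sum_const, Finset.card_univ, mul_comm]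
    have h2 : (Matrix.replicateCol Unit (fun _ => -((Fintype.card V : ℝ) * a⁻¹)) *
        Matrix.replicateRow Unit (fun _ => (1:ℝ))) i j = -((Fintype.card V : ℝ) * a⁻¹) := by
      simp [Matrix.mul_apply]
    simp only [Matrix.sub_apply, Matrix.add_apply, h1, h2]
    ring
  rw [hschur, Matrix.det_add_replicateCol_mul_replicateRow hBd]
  have h11 : ((1 : Matrix Unit Unit ℝ) + (Matrix.replicateRow Unit (fun _ => (1:ℝ)) : Matrix Unit W ℝ) * B⁻¹ *
      (Matrix.replicateCol Unit (fun _ => -((Fintype.card V : ℝ) * a⁻¹)) : Matrix W Unit ℝ)).det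
      = 1 - (Fintype.card V : ℝ) * a⁻¹ * ((Fintype.card W : ℝ) * b⁻¹) := by
    rw [Matrix.det_unique, Matrix.add_apply, Matrix.one_apply_eq]
    simp only [Matrix.mul_apply, Matrix.replicateRow_apply, Matrix.replicateCol_apply, one_mul]
    rw [show ∑ j : W, (∑ i : W, B⁻¹ i j) * -((Fintype.card V : ℝ) * a⁻¹)
        = (∑ j : W, ∑ i : W, B⁻¹ i j) * -((Fintype.card V : ℝ) * a⁻¹) from
      (Finset.sum_mul _ _ _).symm]
    rw [Finset.sum_comm]
    simp only [hBrow, Finset.sum_const, Finset.card_univ, nsmul_eq_mul]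
    ring
  rw [h11]
  field_simp

lemma joinGraph_adj_ll {V W : Type*} (G : SimpleGraph V) (H : SimpleGraph W) (a b : V) :
    (joinGraph G H).Adj (Sum.inl a) (Sum.inl b) = G.Adj a b := rfl

lemma joinGraph_adj_rr {V W : Type*} (G : SimpleGraph V) (H : SimpleGraph W) (a b : W) :
    (joinGraph G H).Adj (Sum.inr a) (Sum.inr b) = H.Adj a b := rfl

lemma joinGraph_adj_lr {V W : Type*} (G : SimpleGraph V) (H : SimpleGraph W) (a : V) (b : W) :
    (joinGraph G H).Adj (Sum.inl a) (Sum.inr b) = True := rfl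

lemma joinGraph_adj_rl {V W : Type*} (G : SimpleGraph V) (H : SimpleGraph W) (a : W) (b : V) :
    (joinGraph G H).Adj (Sum.inr a) (Sum.inl b) = True := rfl

lemma degree_join_inl {V W : Type*} [Fintype V] [Fintype W]
    (G : SimpleGraph V) (H : SimpleGraph W) (a : V) :
    (((joinGraph G H).degree (Sum.inl a) : ℝ)) = G.degree a + Fintype.card W := by
  rw [SimpleGraph.degree_eq_sum_if_adj (R := ℝ), Fintype.sum_sum_type]
  rw [SimpleGraph.degree_eq_sum_if_adj (R := ℝ)]
  congr 1
  simp [joinGraph_adj_lr]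

lemma degree_join_inr {V W : Type*} [Fintype V] [Fintype W]
    (G : SimpleGraph V) (H : SimpleGraph W) (a : W) :
    (((joinGraph G H).degree (Sum.inr a) : ℝ)) = H.degree a + Fintype.card V := by
  rw [SimpleGraph.degree_eq_sum_if_adj (R := ℝ), Fintype.sum_sum_type]
  rw [SimpleGraph.degree_eq_sum_if_adj (R := ℝ)]
  rw [add_comm]
  congr 1
  simp [joinGraph_adj_rl]

lemma lap_join {V W : Type*} [Fintype V] [Fintype W] [DecidableEq V] [DecidableEq W]
    (G : SimpleGraph V) (H : SimpleGraph W) :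
    (joinGraph G H).lapMatrix ℝ =
      Matrix.fromBlocks (G.lapMatrix ℝ + (Fintype.card W : ℝ) • 1)
        (-(Matrix.of fun _ _ => (1:ℝ))) (-(Matrix.of fun _ _ => (1:ℝ)))
        (H.lapMatrix ℝ + (Fintype.card V : ℝ) • 1) := by
  ext i j
  cases i with
  | inl a =>
    cases j with
    | inl b =>
      simp only [SimpleGraph.lapMatrix, SimpleGraph.degMatrix, SimpleGraph.adjMatrix,
        Matrix.sub_apply, Matrix.fromBlocks_apply₁₁, Matrix.add_apply, Matrix.smul_apply,
        Matrix.diagonal_apply, Matrix.of_apply, Matrix.one_apply, smul_eq_mul]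
      by_cases h : a = b
      · subst h
        simp [degree_join_inl G H a, joinGraph_adj_ll]
      · have h' : (Sum.inl a : V ⊕ W) ≠ Sum.inl b := by simp [h]
        simp [h, h', joinGraph_adj_ll]
        congr
    | inr b =>
      simp only [SimpleGraph.lapMatrix, SimpleGraph.degMatrix, SimpleGraph.adjMatrix,
        Matrix.sub_apply, Matrix.fromBlocks_apply₁₂, Matrix.diagonal_apply, Matrix.of_apply,
        Matrix.neg_apply]
      simp [joinGraph_adj_lr]
  | inr a =>
    cases j with
    | inl b =>
      simp only [SimpleGraph.lapMatrix, SimpleGraph.degMatrix, SimpleGraph.adjMatrix,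
        Matrix.sub_apply, Matrix.fromBlocks_apply₂₁, Matrix.diagonal_apply, Matrix.of_apply,
        Matrix.neg_apply]
      simp [joinGraph_adj_rl]
    | inr b =>
      simp only [SimpleGraph.lapMatrix, SimpleGraph.degMatrix, SimpleGraph.adjMatrix,
        Matrix.sub_apply, Matrix.fromBlocks_apply₂₂, Matrix.add_apply, Matrix.smul_apply,
        Matrix.diagonal_apply, Matrix.of_apply, Matrix.one_apply, smul_eq_mul]
      by_cases h : a = b
      · subst h
        simp [degree_join_inr G H a, joinGraph_adj_rr]
      · have h' : (Sum.inr a : V ⊕ W) ≠ Sum.inr b := by simp [h]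
        simp [h, h', joinGraph_adj_rr]
        congr

end Aux

/-- the Laplacian characteristic polynomial of the join satisfies
`μ(G₁+G₂; x) = [x(x-n₁-n₂)/((x-n₁)(x-n₂))] · μ(G₁; x-n₂) · μ(G₂; x-n₁)`,
stated with denominators cleared. -/
theorem lap_charpoly_join {V W : Type*} [Fintype V] [Fintype W] [DecidableEq V] [DecidableEq W]
    (G : SimpleGraph V) (H : SimpleGraph W) :
    (X - C ((Fintype.card V : ℝ))) * (X - C ((Fintype.card W : ℝ))) *
        ((joinGraph G H).lapMatrix ℝ).charpoly =
      X * (X - C ((Fintype.card V : ℝ) + (Fintype.card W : ℝ))) *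
        ((G.lapMatrix ℝ).charpoly.comp (X - C ((Fintype.card W : ℝ)))) *
        ((H.lapMatrix ℝ).charpoly.comp (X - C ((Fintype.card V : ℝ)))) := by
  set n1 : ℝ := (Fintype.card V : ℝ) with hn1
  set n2 : ℝ := (Fintype.card W : ℝ) with hn2
  set p1 := (G.lapMatrix ℝ).charpoly.comp (X - C n2) with hp1
  set p2 := (H.lapMatrix ℝ).charpoly.comp (X - C n1) with hp2
  have hp1m : p1.Monic := (Matrix.charpoly_monic _).comp_X_sub_C _
  have hp2m : p2.Monic := (Matrix.charpoly_monic _).comp_X_sub_C _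
  apply Polynomial.eq_of_infinite_eval_eq
  have hfin : ({x : ℝ | p1.IsRoot x} ∪ {x : ℝ | p2.IsRoot x} ∪ {n1, n2}).Finite :=
    ((Polynomial.finite_setOf_isRoot hp1m.ne_zero).union
      (Polynomial.finite_setOf_isRoot hp2m.ne_zero)).union ((Set.finite_singleton n2).insert n1)
  refine Set.Infinite.mono ?_ hfin.infinite_compl
  intro x hx
  simp only [Set.mem_compl_iff, Set.mem_union, Set.mem_setOf_eq, Set.mem_insert_iff,
    Set.mem_singleton_iff, not_or] at hx
  obtain ⟨⟨hr1, hr2⟩, hxn1, hxn2⟩ := hx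
  set A : Matrix V V ℝ := (x - n2) • (1 : Matrix V V ℝ) - G.lapMatrix ℝ with hAdef
  set B : Matrix W W ℝ := (x - n1) • (1 : Matrix W W ℝ) - H.lapMatrix ℝ with hBdef
  have hevA : p1.eval x = A.det := by
    rw [hp1, Polynomial.eval_comp]
    simp [eval_charpoly', hAdef]
  have hevB : p2.eval x = B.det := by
    rw [hp2, Polynomial.eval_comp]
    simp [eval_charpoly', hBdef]
  have hAv : Matrix.mulVec A (fun _ => 1) = (x - n2) • (fun _ => (1:ℝ)) := by
    rw [hAdef, Matrix.sub_mulVec, Matrix.smul_mulVec, Matrix.one_mulVec,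
      SimpleGraph.lapMatrix_mulVec_const_eq_zero]
    simp
  have hBv : Matrix.mulVec B (fun _ => 1) = (x - n1) • (fun _ => (1:ℝ)) := by
    rw [hBdef, Matrix.sub_mulVec, Matrix.smul_mulVec, Matrix.one_mulVec,
      SimpleGraph.lapMatrix_mulVec_const_eq_zero]
    simp
  have hAd : IsUnit A.det := by
    rw [isUnit_iff_ne_zero, ← hevA]; exact hr1
  have hBd : IsUnit B.det := by
    rw [isUnit_iff_ne_zero, ← hevB]; exact hr2
  have ha : x - n2 ≠ 0 := sub_ne_zero.mpr hxn2
  have hb : x - n1 ≠ 0 := sub_ne_zero.mpr hxn1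
  have hblock : x • (1 : Matrix (V ⊕ W) (V ⊕ W) ℝ) - (joinGraph G H).lapMatrix ℝ =
      Matrix.fromBlocks A (Matrix.of fun _ _ => (1:ℝ)) (Matrix.of fun _ _ => (1:ℝ)) B := by
    rw [lap_join]
    ext i j
    cases i with
    | inl a =>
      cases j with
      | inl b =>
        by_cases h : a = b
        · simp [hAdef, Matrix.one_apply, h, sub_sub]
          rw [hn2]; ring
        · simp [hAdef, Matrix.one_apply, h, sub_sub]
      | inr b => simp [Matrix.one_apply]
    | inr a =>
      cases j with
      | inl b => simp [Matrix.one_apply]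
      | inr b =>
        by_cases h : a = b
        · simp [hBdef, Matrix.one_apply, h, sub_sub]
          rw [hn1]; ring
        · simp [hBdef, Matrix.one_apply, h, sub_sub]
  have hbd := block_det A B (x - n2) (x - n1) hAv hBv hAd hBd ha hb
  show _ = _
  simp only [Set.mem_setOf_eq, Polynomial.eval_mul, Polynomial.eval_sub, Polynomial.eval_X,
    Polynomial.eval_C, Polynomial.eval_add]
  rw [eval_charpoly', hblock]
  rw [show ((G.lapMatrix ℝ).charpoly.comp (X - C n2)).eval x = A.det from hevA,
    show ((H.lapMatrix ℝ).charpoly.comp (X - C n1)).eval x = B.det from hevB]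
  linear_combination hbd
end

section
/- For m, n ≥ 2, the value n is a Laplacian eigenvalue of the graph NC(F_{m,n}) with multiplicity at least m - 1, witnessed by eigenvectors of the form (0_n, v, v, 0_n) where v ⊥ 1 in R^m. -/
open scoped Classical
open Matrix

/-- The Laplacian matrix of the path graph `P_n`. -/
noncomputable def lapP (n : ℕ) : Matrix (Fin n) (Fin n) ℝ :=
  (SimpleGraph.pathGraph n).lapMatrix ℝ

/-- The all-ones matrix. -/
def JJ (a b : ℕ) : Matrix (Fin a) (Fin b) ℝ := Matrix.of fun _ _ => 1

/-- The Laplacian matrix of the graph `NC(F_{m,n})`, obtained from two disjoint copies of the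
generalized fan graph `F_{m,n} = K̄_m + P_n` by adding a perfect matching between the
corresponding `m` center vertices.  Vertex order: first path, first centers, second centers,
second path. -/
noncomputable def lapNC (m n : ℕ) :
    Matrix ((Fin n ⊕ Fin m) ⊕ (Fin m ⊕ Fin n)) ((Fin n ⊕ Fin m) ⊕ (Fin m ⊕ Fin n)) ℝ :=
  Matrix.fromBlocks
    (Matrix.fromBlocks (lapP n + (m : ℝ) • 1) (-JJ n m) (-JJ m n) (((n : ℝ) + 1) • 1))
    (Matrix.fromBlocks 0 0 (-1) 0)
    (Matrix.fromBlocks 0 (-1) 0 0)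
    (Matrix.fromBlocks (((n : ℝ) + 1) • 1) (-JJ m n) (-JJ n m) (lapP n + (m : ℝ) • 1))

lemma JJ_mulVec_zero {a b : ℕ} (v : Fin b → ℝ) (hv : ∑ i, v i = 0) :
    JJ a b *ᵥ v = 0 := by
  funext i
  simp [JJ, Matrix.mulVec, dotProduct, hv]

lemma mulVec_eigen (m n : ℕ) (v : Fin m → ℝ) (hv : ∑ i, v i = 0) :
    lapNC m n *ᵥ Sum.elim (Sum.elim (0 : Fin n → ℝ) v) (Sum.elim v (0 : Fin n → ℝ)) =
      (n : ℝ) • Sum.elim (Sum.elim (0 : Fin n → ℝ) v) (Sum.elim v (0 : Fin n → ℝ)) := by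
  rw [lapNC]
  simp only [Matrix.fromBlocks_mulVec]
  have hJ := JJ_mulVec_zero (a := n) v hv
  funext x
  rcases x with (x | x) <;> rcases x with (i | j) <;>
    simp [Matrix.mulVec_add, Matrix.add_mulVec, Matrix.neg_mulVec, hJ, Matrix.smul_mulVec,
      Matrix.mulVec_zero, Pi.add_apply, Pi.smul_apply, smul_eq_mul] <;> ring

/-- The linear embedding `v ↦ (0, v, v, 0)`. -/
noncomputable def emb (m n : ℕ) :
    (Fin m → ℝ) →ₗ[ℝ] (((Fin n ⊕ Fin m) ⊕ (Fin m ⊕ Fin n)) → ℝ) where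
  toFun v := Sum.elim (Sum.elim (0 : Fin n → ℝ) v) (Sum.elim v (0 : Fin n → ℝ))
  map_add' v w := by
    funext x; rcases x with (x | x) <;> rcases x with (i | j) <;> simp
  map_smul' c v := by
    funext x; rcases x with (x | x) <;> rcases x with (i | j) <;> simp

/-- The sum functional. -/
noncomputable def sumL (m : ℕ) : (Fin m → ℝ) →ₗ[ℝ] ℝ := ∑ i, LinearMap.proj i

lemma sumL_apply (m : ℕ) (v : Fin m → ℝ) : sumL m v = ∑ i, v i := by
  simp [sumL]

/-- for m, n ≥ 2, the value n is a Laplacian eigenvalue of NC(F_{m,n}) with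
multiplicity at least m-1, witnessed by eigenvectors (0, v, v, 0) with v ⊥ 1 in ℝ^m. -/
theorem lapNC_eigenvalue_n (m n : ℕ) (hm : 2 ≤ m) (hn : 2 ≤ n) :
    (∀ v : Fin m → ℝ, ∑ i, v i = 0 →
      lapNC m n *ᵥ Sum.elim (Sum.elim (0 : Fin n → ℝ) v) (Sum.elim v (0 : Fin n → ℝ)) =
        (n : ℝ) • Sum.elim (Sum.elim (0 : Fin n → ℝ) v) (Sum.elim v (0 : Fin n → ℝ))) ∧
    m - 1 ≤ Module.finrank ℝ
      (Module.End.eigenspace (Matrix.toLin' (lapNC m n)) ((n : ℝ))) := by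
  refine ⟨fun v hv => mulVec_eigen m n v hv, ?_⟩
  set E := Module.End.eigenspace (Matrix.toLin' (lapNC m n)) ((n : ℝ)) with hE
  have hmem : ∀ v ∈ LinearMap.ker (sumL m), emb m n v ∈ E := by
    intro v hv
    rw [LinearMap.mem_ker, sumL_apply] at hv
    rw [hE, Module.End.mem_eigenspace_iff, Matrix.toLin'_apply]
    exact mulVec_eigen m n v hv
  let Φ : LinearMap.ker (sumL m) →ₗ[ℝ] E :=
    LinearMap.codRestrict E ((emb m n).comp (LinearMap.ker (sumL m)).subtype)
      (fun x => hmem x x.2)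
  have hinj : Function.Injective Φ := by
    intro x y hxy
    ext j
    have h := congrFun (congrArg Subtype.val hxy) (Sum.inl (Sum.inr j))
    simpa [Φ, emb, LinearMap.codRestrict] using h
  have hle : Module.finrank ℝ (LinearMap.ker (sumL m)) ≤ Module.finrank ℝ E :=
    LinearMap.finrank_le_finrank_of_injective hinj
  have hker : Module.finrank ℝ (LinearMap.ker (sumL m)) = m - 1 := by
    have hsurj : Function.Surjective (sumL m) := by
      intro c
      refine ⟨fun _ => c / m, ?_⟩
      have hm0 : (m : ℝ) ≠ 0 := by positivity
      rw [sumL_apply]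
      rw [Finset.sum_const, Finset.card_univ, Fintype.card_fin, nsmul_eq_mul]
      field_simp
    have h1 : Module.finrank ℝ (LinearMap.range (sumL m)) = 1 := by
      rw [LinearMap.range_eq_top.mpr hsurj]
      simp
    have h2 := LinearMap.finrank_range_add_finrank_ker (sumL m)
    rw [h1, Module.finrank_fin_fun] at h2
    omega
  omega
end

section
/- For m, n ≥ 2, the value n + 2 is a Laplacian eigenvalue of NC(F_{m,n}) with multiplicity at least m - 1, witnessed by eigenvectors of the form (0_n, v, -v, 0_n) where v ⊥ 1 in R^m. -/
open scoped Classical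
open Matrix

/-!
For `v ⊥ 1` the all-ones blocks annihilate `v`, so on `(0, v, -v, 0)` the Laplacian acts only
through the diagonal blocks `(n + 1) • 1` and the matching `-1`, which together give
`(n + 2) • (0, v, -v, 0)`. The map `v ↦ (0, v, -v, 0)` is injective, and `1ᗮ` has dimension at least
`m - 1`, whence the multiplicity bound.
-/

theorem JJ_mulVec_eq_zero_of_sum_eq_zero (a : ℕ) {m : ℕ} {v : Fin m → ℝ} (hv : ∑ i, v i = 0) :
    JJ a m *ᵥ v = 0 := by
  funext i
  simp [JJ, mulVec, dotProduct, hv]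

theorem lapNC_mulVec_of_sum_eq_zero (m n : ℕ) (v : Fin m → ℝ) (hv : ∑ i, v i = 0) :
    lapNC m n *ᵥ Sum.elim (Sum.elim (0 : Fin n → ℝ) v) (Sum.elim (-v) (0 : Fin n → ℝ)) =
      ((n : ℝ) + 2) • Sum.elim (Sum.elim (0 : Fin n → ℝ) v) (Sum.elim (-v) (0 : Fin n → ℝ)) := by
  have hJ (a : ℕ) : JJ a m *ᵥ v = 0 := JJ_mulVec_eq_zero_of_sum_eq_zero a hv
  funext x
  rcases x with (x | x) | (x | x) <;>
    simp [lapNC, fromBlocks_mulVec, mulVec_neg, neg_mulVec, smul_mulVec, hJ] <;> ring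

noncomputable def centerAntisymm (m n : ℕ) :
    (Fin m → ℝ) →ₗ[ℝ] ((Fin n ⊕ Fin m) ⊕ (Fin m ⊕ Fin n) → ℝ) where
  toFun v := Sum.elim (Sum.elim (0 : Fin n → ℝ) v) (Sum.elim (-v) (0 : Fin n → ℝ))
  map_add' x y := by
    funext z
    rcases z with (z | z) | (z | z) <;> simp [add_comm]
  map_smul' c x := by
    funext z
    rcases z with (z | z) | (z | z) <;> simp

theorem centerAntisymm_injective (m n : ℕ) : Function.Injective (centerAntisymm m n) :=
  fun _ _ h => funext fun i => congrFun h (Sum.inl (Sum.inr i))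

theorem finrank_sub_one_le_finrank_ker {K V : Type*} [Field K] [AddCommGroup V] [Module K V]
    [FiniteDimensional K V] (f : V →ₗ[K] K) :
    Module.finrank K V - 1 ≤ Module.finrank K (LinearMap.ker f) := by
  have hrange : Module.finrank K (LinearMap.range f) ≤ 1 :=
    (Submodule.finrank_le _).trans (Module.finrank_self K).le
  have := LinearMap.finrank_range_add_finrank_ker f
  omega

theorem lapNC_eigenvalue_n_add_two_general (m n : ℕ) :
    (∀ v : Fin m → ℝ, ∑ i, v i = 0 →
      lapNC m n *ᵥ Sum.elim (Sum.elim (0 : Fin n → ℝ) v) (Sum.elim (-v) (0 : Fin n → ℝ)) =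
        ((n : ℝ) + 2) • Sum.elim (Sum.elim (0 : Fin n → ℝ) v) (Sum.elim (-v) (0 : Fin n → ℝ))) ∧
    m - 1 ≤ Module.finrank ℝ
      (Module.End.eigenspace (Matrix.toLin' (lapNC m n)) ((n : ℝ) + 2)) := by
  refine ⟨lapNC_mulVec_of_sum_eq_zero m n, ?_⟩
  set sumOnes : (Fin m → ℝ) →ₗ[ℝ] ℝ := ∑ i, LinearMap.proj i
  have hmap : (LinearMap.ker sumOnes).map (centerAntisymm m n) ≤
      Module.End.eigenspace (Matrix.toLin' (lapNC m n)) ((n : ℝ) + 2) := by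
    rintro _ ⟨v, hv, rfl⟩
    rw [Module.End.mem_eigenspace_iff, Matrix.toLin'_apply]
    exact lapNC_mulVec_of_sum_eq_zero m n v (by simpa [sumOnes] using hv)
  calc m - 1 ≤ Module.finrank ℝ (LinearMap.ker sumOnes) := by
        simpa using finrank_sub_one_le_finrank_ker sumOnes
    _ = Module.finrank ℝ ((LinearMap.ker sumOnes).map (centerAntisymm m n)) :=
        (Submodule.equivMapOfInjective _ (centerAntisymm_injective m n) _).finrank_eq
    _ ≤ _ := Submodule.finrank_mono hmap

/-- for m, n ≥ 2, the value n+2 is a Laplacian eigenvalue of NC(F_{m,n}) with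
multiplicity at least m-1, witnessed by eigenvectors (0, v, -v, 0) with v ⊥ 1 in ℝ^m. -/
theorem lapNC_eigenvalue_n_add_two (m n : ℕ) (hm : 2 ≤ m) (hn : 2 ≤ n) :
    (∀ v : Fin m → ℝ, ∑ i, v i = 0 →
      lapNC m n *ᵥ Sum.elim (Sum.elim (0 : Fin n → ℝ) v) (Sum.elim (-v) (0 : Fin n → ℝ)) =
        ((n : ℝ) + 2) • Sum.elim (Sum.elim (0 : Fin n → ℝ) v) (Sum.elim (-v) (0 : Fin n → ℝ))) ∧
    m - 1 ≤ Module.finrank ℝ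
      (Module.End.eigenspace (Matrix.toLin' (lapNC m n)) ((n : ℝ) + 2)) :=
  lapNC_eigenvalue_n_add_two_general m n
end

section
/- For m, n ≥ 2 and each j = 1, ..., n-1, the value m + 2 - 2cos(πj/n) is a Laplacian eigenvalue of NC(F_{m,n}) with multiplicity at least 2: if v is an eigenvector of L(P_n) for eigenvalue 2 - 2cos(πj/n), then (v, 0, 0, 0) and (0, 0, 0, v) are eigenvectors of L(NC(F_{m,n})) for eigenvalue m + 2 - 2cos(πj/n). -/
/-! Eigenvectors of `L(P_n)` with nonzero eigenvalue are orthogonal to the all-ones vector, so the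
all-ones blocks `J` annihilate them. A vector supported on one copy of `P_n` is then moved by
`L(NC(F_{m,n}))` only through the diagonal block `L(P_n) + m I`, and the two copies give two
independent eigenvectors. -/

open scoped Classical
open Matrix

theorem SimpleGraph.sum_eq_zero_of_lapMatrix_mulVec_eq_smul {V R : Type*} [Fintype V]
    [DecidableEq V] [CommRing R] [NoZeroDivisors R] (G : SimpleGraph V) [DecidableRel G.Adj]
    {v : V → R} {μ : R} (hμ : μ ≠ 0) (hv : G.lapMatrix R *ᵥ v = μ • v) : ∑ i, v i = 0 := by
  have h : 1 ⬝ᵥ (G.lapMatrix R *ᵥ v) = 0 := by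
    rw [dotProduct_mulVec, ← mulVec_transpose, (G.isSymm_lapMatrix R).eq]
    exact (congrArg (· ⬝ᵥ v) (G.lapMatrix_mulVec_const_eq_zero)).trans (zero_dotProduct v)
  rw [hv, dotProduct_smul, one_dotProduct, smul_eq_zero] at h
  exact h.resolve_left hμ

theorem two_sub_two_mul_cos_pi_mul_div_ne_zero {j n : ℕ} (hj : 0 < j) (hjn : j < n) :
    2 - 2 * Real.cos (Real.pi * j / n) ≠ 0 := by
  have hn : (0 : ℝ) < n := by exact_mod_cast hj.trans hjn
  have hpos : 0 < Real.pi * j / n := by positivity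
  have hle : Real.pi * j / n ≤ Real.pi := by
    rw [div_le_iff₀ hn]
    exact mul_le_mul_of_nonneg_left (by exact_mod_cast hjn.le) Real.pi_pos.le
  have := Real.cos_lt_cos_of_nonneg_of_le_pi le_rfl hle hpos
  rw [Real.cos_zero] at this
  linarith

theorem JJ_mulVec (a b : ℕ) (v : Fin b → ℝ) : JJ a b *ᵥ v = fun _ => ∑ i, v i := by
  ext
  simp [JJ, mulVec, dotProduct]

section Eigenvector

variable {m n : ℕ} {v : Fin n → ℝ} {μ : ℝ}

theorem lapP_add_smul_one_mulVec (hv : lapP n *ᵥ v = μ • v) :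
    (lapP n + (m : ℝ) • 1) *ᵥ v = ((m : ℝ) + μ) • v := by
  rw [add_mulVec, hv, smul_mulVec, one_mulVec, add_smul, add_comm]

theorem lapNC_mulVec_first_path (hv : lapP n *ᵥ v = μ • v) (hsum : ∑ i, v i = 0) :
    lapNC m n *ᵥ Sum.elim (Sum.elim v 0) (Sum.elim 0 0) =
      ((m : ℝ) + μ) • Sum.elim (Sum.elim v 0) (Sum.elim 0 0) := by
  ext ((i | i) | (i | i)) <;>
    simp [lapNC, fromBlocks_mulVec, lapP_add_smul_one_mulVec hv, neg_mulVec, JJ_mulVec, hsum]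

theorem lapNC_mulVec_second_path (hv : lapP n *ᵥ v = μ • v) (hsum : ∑ i, v i = 0) :
    lapNC m n *ᵥ Sum.elim (Sum.elim (0 : Fin n → ℝ) 0) (Sum.elim (0 : Fin m → ℝ) v) =
      ((m : ℝ) + μ) • Sum.elim (Sum.elim (0 : Fin n → ℝ) 0) (Sum.elim (0 : Fin m → ℝ) v) := by
  ext ((i | i) | (i | i)) <;>
    simp [lapNC, fromBlocks_mulVec, lapP_add_smul_one_mulVec hv, neg_mulVec, JJ_mulVec, hsum]

end Eigenvector

theorem linearIndependent_sumElim_pair {K α β : Type*} [Field K] {x : α → K} {y : β → K}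
    (hx : x ≠ 0) (hy : y ≠ 0) : LinearIndependent K ![Sum.elim x 0, Sum.elim 0 y] := by
  rw [LinearIndependent.pair_iff]
  intro s t hst
  have hs : s • x = 0 := funext fun i => by simpa using congrFun hst (Sum.inl i)
  have ht : t • y = 0 := funext fun i => by simpa using congrFun hst (Sum.inr i)
  exact ⟨(smul_eq_zero.1 hs).resolve_right hx, (smul_eq_zero.1 ht).resolve_right hy⟩

theorem Submodule.two_le_finrank_of_linearIndependent_pair {K V : Type*} [DivisionRing K]
    [AddCommGroup V] [Module K V] [FiniteDimensional K V] {S : Submodule K V} {x y : V}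
    (hx : x ∈ S) (hy : y ∈ S) (hxy : LinearIndependent K ![x, y]) : 2 ≤ Module.finrank K S :=
  calc 2 = Module.finrank K (span K (Set.range ![x, y])) := by
        rw [finrank_span_eq_card hxy, Fintype.card_fin]
    _ ≤ Module.finrank K S :=
        Submodule.finrank_mono <| span_le.2 <| Set.range_subset_iff.2 fun i => by
          fin_cases i <;> assumption

theorem lapNC_eigenvalue_path_general (m n j : ℕ)
    (hj1 : 1 ≤ j) (hjn : j ≤ n - 1) (v : Fin n → ℝ) (hv : v ≠ 0)
    (hev : lapP n *ᵥ v = (2 - 2 * Real.cos (Real.pi * j / n)) • v) :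
    (lapNC m n *ᵥ Sum.elim (Sum.elim v (0 : Fin m → ℝ)) (Sum.elim (0 : Fin m → ℝ) (0 : Fin n → ℝ)) =
      ((m : ℝ) + 2 - 2 * Real.cos (Real.pi * j / n)) •
        Sum.elim (Sum.elim v (0 : Fin m → ℝ)) (Sum.elim (0 : Fin m → ℝ) (0 : Fin n → ℝ))) ∧
    (lapNC m n *ᵥ Sum.elim (Sum.elim (0 : Fin n → ℝ) (0 : Fin m → ℝ)) (Sum.elim (0 : Fin m → ℝ) v) =
      ((m : ℝ) + 2 - 2 * Real.cos (Real.pi * j / n)) •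
        Sum.elim (Sum.elim (0 : Fin n → ℝ) (0 : Fin m → ℝ)) (Sum.elim (0 : Fin m → ℝ) v)) ∧
    2 ≤ Module.finrank ℝ
      (Module.End.eigenspace (Matrix.toLin' (lapNC m n))
        ((m : ℝ) + 2 - 2 * Real.cos (Real.pi * j / n))) := by
  have hμ := two_sub_two_mul_cos_pi_mul_div_ne_zero (j := j) (n := n) hj1 (by omega)
  have hsum := (SimpleGraph.pathGraph n).sum_eq_zero_of_lapMatrix_mulVec_eq_smul hμ hev
  have h₁ := lapNC_mulVec_first_path (m := m) hev hsum
  have h₂ := lapNC_mulVec_second_path (m := m) hev hsum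
  rw [add_sub_assoc]
  refine ⟨h₁, h₂, ?_⟩
  have hindep := linearIndependent_sumElim_pair (K := ℝ)
    (x := Sum.elim v (0 : Fin m → ℝ)) (y := Sum.elim (0 : Fin m → ℝ) v)
    (fun h => hv (funext fun i => congrFun h (Sum.inl i)))
    (fun h => hv (funext fun i => congrFun h (Sum.inr i)))
  exact Submodule.two_le_finrank_of_linearIndependent_pair
    (Module.End.mem_eigenspace_iff.2 h₁) (Module.End.mem_eigenspace_iff.2 h₂)
    (by simpa only [Sum.elim_zero_zero] using hindep)

/-- for m, n ≥ 2 and 1 ≤ j ≤ n-1, the value m+2-2cos(πj/n) is a Laplacian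
eigenvalue of NC(F_{m,n}) with multiplicity at least 2: if v is an eigenvector of L(P_n) for
the eigenvalue 2-2cos(πj/n), then (v,0,0,0) and (0,0,0,v) are eigenvectors of L(NC(F_{m,n}))
for the eigenvalue m+2-2cos(πj/n). -/
theorem lapNC_eigenvalue_path (m n j : ℕ) (hm : 2 ≤ m) (hn : 2 ≤ n)
    (hj1 : 1 ≤ j) (hjn : j ≤ n - 1) (v : Fin n → ℝ) (hv : v ≠ 0)
    (hev : lapP n *ᵥ v = (2 - 2 * Real.cos (Real.pi * j / n)) • v) :
    (lapNC m n *ᵥ Sum.elim (Sum.elim v (0 : Fin m → ℝ)) (Sum.elim (0 : Fin m → ℝ) (0 : Fin n → ℝ)) =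
      ((m : ℝ) + 2 - 2 * Real.cos (Real.pi * j / n)) •
        Sum.elim (Sum.elim v (0 : Fin m → ℝ)) (Sum.elim (0 : Fin m → ℝ) (0 : Fin n → ℝ))) ∧
    (lapNC m n *ᵥ Sum.elim (Sum.elim (0 : Fin n → ℝ) (0 : Fin m → ℝ)) (Sum.elim (0 : Fin m → ℝ) v) =
      ((m : ℝ) + 2 - 2 * Real.cos (Real.pi * j / n)) •
        Sum.elim (Sum.elim (0 : Fin n → ℝ) (0 : Fin m → ℝ)) (Sum.elim (0 : Fin m → ℝ) v)) ∧
    2 ≤ Module.finrank ℝ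
      (Module.End.eigenspace (Matrix.toLin' (lapNC m n))
        ((m : ℝ) + 2 - 2 * Real.cos (Real.pi * j / n))) :=
  lapNC_eigenvalue_path_general m n j hj1 hjn v hv hev
end

section
/- For m, n ≥ 2 and each nonzero Laplacian eigenvalue λ of P_n, the value 5n + 3m - λ is a distance Laplacian eigenvalue of NC(F_{m,n}) with multiplicity at least 2. -/
open scoped Classical
open Matrix

/-- Diagonal block for the path vertices: `(5n+3m)I - 2J - L(P_n)`. -/
noncomputable def DL1 (m n : ℕ) : Matrix (Fin n) (Fin n) ℝ :=
  (5 * (n : ℝ) + 3 * m) • 1 - (2 : ℝ) • JJ n n - lapP n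

/-- Diagonal block for the center vertices: `(3n+5m-2)I - 2J`. -/
noncomputable def DL2 (m n : ℕ) : Matrix (Fin m) (Fin m) ℝ :=
  (3 * (n : ℝ) + 5 * m - 2) • 1 - (2 : ℝ) • JJ m m

/-- The distance Laplacian matrix of `NC(F_{m,n})`, in block form with vertex order:
first path, first centers, second centers, second path. -/
noncomputable def distLapNC (m n : ℕ) :
    Matrix ((Fin n ⊕ Fin m) ⊕ (Fin m ⊕ Fin n)) ((Fin n ⊕ Fin m) ⊕ (Fin m ⊕ Fin n)) ℝ :=
  Matrix.fromBlocks
    (Matrix.fromBlocks (DL1 m n) (-JJ n m) (-JJ m n) (DL2 m n))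
    (Matrix.fromBlocks (-(2 : ℝ) • JJ n m) (-(3 : ℝ) • JJ n n)
      (-((3 : ℝ) • JJ m m - (2 : ℝ) • 1)) (-(2 : ℝ) • JJ m n))
    (Matrix.fromBlocks (-(2 : ℝ) • JJ m n) (-((3 : ℝ) • JJ m m - (2 : ℝ) • 1))
      (-(3 : ℝ) • JJ n n) (-(2 : ℝ) • JJ n m))
    (Matrix.fromBlocks (DL2 m n) (-JJ m n) (-JJ n m) (DL1 m n))

lemma JJ_mulVec_eq_zero (a : ℕ) {n : ℕ} {v : Fin n → ℝ} (hs : ∑ j, v j = 0) :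
    JJ a n *ᵥ v = 0 := by
  funext i
  simp [JJ, Matrix.mulVec, dotProduct, hs]

lemma sum_of_eigenvec {n : ℕ} {lam : ℝ} (hlam : lam ≠ 0) {v : Fin n → ℝ}
    (hev : lapP n *ᵥ v = lam • v) : ∑ j, v j = 0 := by
  have h2 : (fun _ => (1:ℝ)) ⬝ᵥ (lapP n *ᵥ v) = 0 := by
    rw [Matrix.dotProduct_mulVec]
    have ht : (fun _ => (1:ℝ)) ᵥ* lapP n = 0 := by
      rw [show lapP n = (lapP n)ᵀ from
        (SimpleGraph.isSymm_lapMatrix (G := SimpleGraph.pathGraph n) ℝ).symm,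
        Matrix.vecMul_transpose]
      exact SimpleGraph.lapMatrix_mulVec_const_eq_zero (SimpleGraph.pathGraph n)
    rw [ht, zero_dotProduct]
  rw [hev] at h2
  have h3 : lam * ∑ j, v j = 0 := by
    simpa [dotProduct, Finset.mul_sum] using h2
  exact (mul_eq_zero.mp h3).resolve_left hlam

/-- for m, n ≥ 2 and each nonzero Laplacian eigenvalue λ of P_n, the value
5n+3m-λ is a distance Laplacian eigenvalue of NC(F_{m,n}) with multiplicity at least 2. -/
theorem distLapNC_eigenvalue_path (m n : ℕ) (hm : 2 ≤ m) (hn : 2 ≤ n)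
    (lam : ℝ) (hlam : lam ≠ 0) (v : Fin n → ℝ) (hv : v ≠ 0)
    (hev : lapP n *ᵥ v = lam • v) :
    2 ≤ Module.finrank ℝ
      (Module.End.eigenspace (Matrix.toLin' (distLapNC m n))
        (5 * (n : ℝ) + 3 * m - lam)) := by
  set μ : ℝ := 5 * (n : ℝ) + 3 * m - lam with hμ
  have hs : ∑ j, v j = 0 := sum_of_eigenvec hlam hev
  have hJ : ∀ a, JJ a n *ᵥ v = 0 := fun a => JJ_mulVec_eq_zero a hs
  have hDL1 : DL1 m n *ᵥ v = μ • v := by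
    unfold DL1
    rw [Matrix.sub_mulVec, Matrix.sub_mulVec, Matrix.smul_mulVec,
      Matrix.smul_mulVec, Matrix.one_mulVec, hJ n, hev, smul_zero, sub_zero, ← sub_smul]
  have hzmn : (Sum.elim (0 : Fin m → ℝ) (0 : Fin n → ℝ)) = 0 := by
    funext x; cases x <;> rfl
  have hznm : (Sum.elim (0 : Fin n → ℝ) (0 : Fin m → ℝ)) = 0 := by
    funext x; cases x <;> rfl
  set e1 : (Fin n ⊕ Fin m) ⊕ (Fin m ⊕ Fin n) → ℝ :=
    Sum.elim (Sum.elim v 0) (Sum.elim 0 0) with he1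
  set e2 : (Fin n ⊕ Fin m) ⊕ (Fin m ⊕ Fin n) → ℝ :=
    Sum.elim (Sum.elim 0 0) (Sum.elim 0 v) with he2
  have hA : Matrix.fromBlocks (DL1 m n) (-JJ n m) (-JJ m n) (DL2 m n) *ᵥ Sum.elim v 0
      = Sum.elim (μ • v) 0 := by
    rw [Matrix.fromBlocks_mulVec]
    simp [Matrix.mulVec_zero, Matrix.neg_mulVec, hJ m, hDL1]
  have hC : Matrix.fromBlocks (-(2 : ℝ) • JJ m n) (-((3 : ℝ) • JJ m m - (2 : ℝ) • 1))
      (-(3 : ℝ) • JJ n n) (-(2 : ℝ) • JJ n m) *ᵥ Sum.elim v 0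
      = Sum.elim (0 : Fin m → ℝ) (0 : Fin n → ℝ) := by
    rw [Matrix.fromBlocks_mulVec]
    simp [Matrix.mulVec_zero, Matrix.neg_mulVec, Matrix.smul_mulVec, hJ]
  have hD : Matrix.fromBlocks (DL2 m n) (-JJ m n) (-JJ n m) (DL1 m n) *ᵥ Sum.elim 0 v
      = Sum.elim (0 : Fin m → ℝ) (μ • v) := by
    rw [Matrix.fromBlocks_mulVec]
    simp [Matrix.mulVec_zero, Matrix.neg_mulVec, hJ m, hDL1]
  have hB : Matrix.fromBlocks (-(2 : ℝ) • JJ n m) (-(3 : ℝ) • JJ n n)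
      (-((3 : ℝ) • JJ m m - (2 : ℝ) • 1)) (-(2 : ℝ) • JJ m n) *ᵥ Sum.elim 0 v
      = Sum.elim (0 : Fin n → ℝ) (0 : Fin m → ℝ) := by
    rw [Matrix.fromBlocks_mulVec]
    simp [Matrix.mulVec_zero, Matrix.neg_mulVec, Matrix.smul_mulVec, hJ]
  have h1 : distLapNC m n *ᵥ e1 = μ • e1 := by
    rw [he1, distLapNC, Matrix.fromBlocks_mulVec]
    simp only [Sum.elim_comp_inl, Sum.elim_comp_inr, hzmn, Matrix.mulVec_zero, add_zero,
      hA, hC]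
    funext x
    rcases x with (i | i) | (i | i) <;> simp
  have h2 : distLapNC m n *ᵥ e2 = μ • e2 := by
    rw [he2, distLapNC, Matrix.fromBlocks_mulVec]
    simp only [Sum.elim_comp_inl, Sum.elim_comp_inr, hznm, hzmn, Matrix.mulVec_zero, zero_add,
      hB, hD]
    funext x
    rcases x with (i | i) | (i | i) <;> simp
  set W := Module.End.eigenspace (Matrix.toLin' (distLapNC m n)) μ with hW
  have hw1 : e1 ∈ W := by
    rw [hW, Module.End.mem_eigenspace_iff, Matrix.toLin'_apply, h1]
  have hw2 : e2 ∈ W := by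
    rw [hW, Module.End.mem_eigenspace_iff, Matrix.toLin'_apply, h2]
  obtain ⟨i, hi⟩ : ∃ i, v i ≠ 0 := Function.ne_iff.mp hv
  have hli : LinearIndependent ℝ ![(⟨e1, hw1⟩ : W), (⟨e2, hw2⟩ : W)] := by
    rw [LinearIndependent.pair_iff]
    intro s t hst
    have h := congrArg (Subtype.val) hst
    simp only [Submodule.coe_add, Submodule.coe_smul] at h
    constructor
    · have hc := congrFun h (Sum.inl (Sum.inl i))
      simp [he1, he2] at hc
      exact hc.resolve_right hi
    · have hc := congrFun h (Sum.inr (Sum.inr i))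
      simp [he1, he2] at hc
      exact hc.resolve_right hi
  have := hli.fintype_card_le_finrank
  simpa using this
end

section
/- The 4×4 matrix B = [[3(n+m), -m, -2m, -3n], [-n, 3(n+m)-2, -(3m-2), -2n], [-2n, -(3m-2), 3(n+m)-2, -n], [-3n, -2m, -m, 3(n+m)]] has eigenvalues 0, 3(n+m), and (9/2)(n+m) - 2 ± (1/2)√(9n^2 + 9m^2 - 14nm + 24n - 24m + 16); equivalently its characteristic polynomial is x^4 + (-12m - 12n + 4)x^3 + (45m^2 + 98mn + 45n^2 - 24m - 36n)x^2 + (-54m^3 - 186m^2n - 186mn^2 - 54n^3 + 36m^2 + 108mn + 72n^2)x. -/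
open Polynomial Matrix
set_option maxHeartbeats 1600000

/-- the equitable quotient matrix of the distance Laplacian of NC(F_{m,n}) has
eigenvalues 0, 3(n+m), and (9/2)(n+m) - 2 ± (1/2)√(9n²+9m²-14nm+24n-24m+16); equivalently its
characteristic polynomial is the stated quartic. -/
theorem distLap_quotient_matrix_eigenvalues (m n : ℕ) (hm : 0 < m) (hn : 0 < n) :
    let B : Matrix (Fin 4) (Fin 4) ℝ :=
      !![3 * ((n : ℝ) + m), -(m : ℝ), -2 * (m : ℝ), -3 * (n : ℝ);
         -(n : ℝ), 3 * ((n : ℝ) + m) - 2, -(3 * (m : ℝ) - 2), -2 * (n : ℝ);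
         -2 * (n : ℝ), -(3 * (m : ℝ) - 2), 3 * ((n : ℝ) + m) - 2, -(n : ℝ);
         -3 * (n : ℝ), -2 * (m : ℝ), -(m : ℝ), 3 * ((n : ℝ) + m)]
    B.charpoly =
        X ^ 4 + C (-12 * (m : ℝ) - 12 * n + 4) * X ^ 3
          + C (45 * (m : ℝ) ^ 2 + 98 * m * n + 45 * (n : ℝ) ^ 2 - 24 * m - 36 * n) * X ^ 2
          + C (-54 * (m : ℝ) ^ 3 - 186 * (m : ℝ) ^ 2 * n - 186 * (m : ℝ) * n ^ 2
              - 54 * (n : ℝ) ^ 3 + 36 * (m : ℝ) ^ 2 + 108 * m * n + 72 * (n : ℝ) ^ 2) * X ∧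
      B.charpoly.IsRoot 0 ∧
      B.charpoly.IsRoot (3 * ((n : ℝ) + m)) ∧
      B.charpoly.IsRoot ((9 / 2) * ((n : ℝ) + m) - 2
        + (1 / 2) * Real.sqrt (9 * (n : ℝ) ^ 2 + 9 * (m : ℝ) ^ 2 - 14 * n * m
            + 24 * n - 24 * m + 16)) ∧
      B.charpoly.IsRoot ((9 / 2) * ((n : ℝ) + m) - 2
        - (1 / 2) * Real.sqrt (9 * (n : ℝ) ^ 2 + 9 * (m : ℝ) ^ 2 - 14 * n * m
            + 24 * n - 24 * m + 16)) := by
  intro B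
  have hcp : B.charpoly =
        X ^ 4 + C (-12 * (m : ℝ) - 12 * n + 4) * X ^ 3
          + C (45 * (m : ℝ) ^ 2 + 98 * m * n + 45 * (n : ℝ) ^ 2 - 24 * m - 36 * n) * X ^ 2
          + C (-54 * (m : ℝ) ^ 3 - 186 * (m : ℝ) ^ 2 * n - 186 * (m : ℝ) * n ^ 2
              - 54 * (n : ℝ) ^ 3 + 36 * (m : ℝ) ^ 2 + 108 * m * n + 72 * (n : ℝ) ^ 2) * X := by
    have h : B.charpoly = (Matrix.charmatrix B).det := rfl
    rw [h]
    have hM : Matrix.charmatrix B =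
        !![X - C (3 * ((n : ℝ) + m)), C (m : ℝ), C (2 * (m : ℝ)), C (3 * (n : ℝ));
           C (n : ℝ), X - C (3 * ((n : ℝ) + m) - 2), C (3 * (m : ℝ) - 2), C (2 * (n : ℝ));
           C (2 * (n : ℝ)), C (3 * (m : ℝ) - 2), X - C (3 * ((n : ℝ) + m) - 2), C (n : ℝ);
           C (3 * (n : ℝ)), C (2 * (m : ℝ)), C (m : ℝ), X - C (3 * ((n : ℝ) + m))] := by
      ext i j
      fin_cases i <;> fin_cases j <;>
        simp [charmatrix, B, map_neg, _root_.map_mul, map_ofNat] <;> ring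
    rw [hM]
    simp [Matrix.det_succ_row_zero, Fin.sum_univ_succ, Fin.succAbove, show (Fin.castSucc 2 : Fin 4) = 2 from rfl, show (Fin.castSucc 1 : Fin 4) = 1 from rfl, show (Fin.castSucc 0 : Fin 4) = 0 from rfl,
      map_sub, map_add, _root_.map_mul, map_ofNat, _root_.map_one, map_neg, -Fin.val_fin_lt]
    ring
  have hD : (0:ℝ) ≤ 9 * (n : ℝ) ^ 2 + 9 * (m : ℝ) ^ 2 - 14 * n * m + 24 * n - 24 * m + 16 := by
    nlinarith [sq_nonneg (3 * (n:ℝ) - 3 * m + 4), mul_nonneg (Nat.cast_nonneg (α := ℝ) n) (Nat.cast_nonneg (α := ℝ) m)]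
  have hs : (Real.sqrt (9 * (n : ℝ) ^ 2 + 9 * (m : ℝ) ^ 2 - 14 * n * m + 24 * n - 24 * m + 16)) ^ 2
      = 9 * (n : ℝ) ^ 2 + 9 * (m : ℝ) ^ 2 - 14 * n * m + 24 * n - 24 * m + 16 :=
    Real.sq_sqrt hD
  set s := Real.sqrt (9 * (n : ℝ) ^ 2 + 9 * (m : ℝ) ^ 2 - 14 * n * m + 24 * n - 24 * m + 16) with hsdef
  refine ⟨hcp, ?_, ?_, ?_, ?_⟩ <;>
    simp only [IsRoot, hcp, eval_add, eval_mul, eval_pow, eval_C, eval_X]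
  · ring
  · ring
  · linear_combination ((9 / 2 * ((n:ℝ) + m) - 2 + 1 / 2 * s) *
      (9 / 2 * ((n:ℝ) + m) - 2 + 1 / 2 * s - 3 * ((n:ℝ) + m)) / 4) * hs
  · linear_combination ((9 / 2 * ((n:ℝ) + m) - 2 - 1 / 2 * s) *
      (9 / 2 * ((n:ℝ) + m) - 2 - 1 / 2 * s - 3 * ((n:ℝ) + m)) / 4) * hs
end
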